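/- (Greedy 2-approximation for max-sum dispersion.) Let (U,d) be a finite metric space, let p ≥ 1 with |U| ≥ p, and let G_0 = ∅, G_{i+1} = G_i ∪ {u_{i+1}} for 0 ≤ i < p, where each u_{i+1} ∈ U∖G_i maximizes Σ_{v∈G_i} d(u,v) over u ∈ U∖G_i. Then for every subset O ⊆ U with |O| = p, d(G_p) ≥ (1/2)·d(O); i.e., the vertex-greedy algorithm of Ravi, Rosenkrantz and Tayi has approximation ratio no worse than 2 for max-sum p-dispersion. -/
import Mathlib


open Finset

/-- `dispSet d S` is the sum of `d u v` over all unordered pairs `{u,v}` of distinct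
elements of `S` (for a symmetric `d` with `d u u = 0`, half the double sum). -/
noncomputable def dispSet {U : Type*} (d : U → U → ℝ) (S : Finset U) : ℝ :=
  (∑ u ∈ S, ∑ v ∈ S, d u v) / 2

section Aux

variable {U : Type*} [DecidableEq U]

lemma dispSet_nonneg (d : U → U → ℝ) (hnonneg : ∀ u v, 0 ≤ d u v) (S : Finset U) :
    0 ≤ dispSet d S := by
  apply div_nonneg _ (by norm_num)
  exact Finset.sum_nonneg fun u _ => Finset.sum_nonneg fun v _ => hnonneg u v

lemma dispSet_insert (d : U → U → ℝ) (hsymm : ∀ u v, d u v = d v u) (hrefl : ∀ u, d u u = 0)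
    {S : Finset U} {a : U} (ha : a ∉ S) :
    dispSet d (insert a S) = dispSet d S + ∑ x ∈ S, d a x := by
  have h1 : ∑ x ∈ S, d x a = ∑ x ∈ S, d a x :=
    Finset.sum_congr rfl fun x _ => hsymm x a
  unfold dispSet
  simp only [Finset.sum_insert ha, hrefl, Finset.sum_add_distrib, h1]
  ring

/-- Key lemma: if `|O| = |G| + 1` and `g` bounds the sum of distances from any point
outside `G` to `G`, then some `o ∈ O` has total distance at most `2g` to `O \ {o}`. -/
lemma exists_cheap_point (d : U → U → ℝ) (hsymm : ∀ u v, d u v = d v u)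
    (hnonneg : ∀ u v, 0 ≤ d u v) (htri : ∀ u v w, d u w ≤ d u v + d v w)
    (G O : Finset U) (hcard : O.card = G.card + 1)
    (g : ℝ) (hg : ∀ v ∉ G, ∑ x ∈ G, d v x ≤ g) :
    ∃ o ∈ O, ∑ o' ∈ O.erase o, d o o' ≤ 2 * g := by
  classical
  set Out : Finset U := O \ G with hOutdef
  have hOutne : Out.Nonempty := by
    rw [hOutdef, Finset.sdiff_nonempty]
    intro hsub
    have := Finset.card_le_card hsub
    omega
  set k : ℕ := Out.card with hk
  have hkpos : 0 < k := Finset.card_pos.mpr hOutne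
  set C : Finset U := G \ O with hC
  -- card of C
  have hcardC : C.card + 1 = k := by
    have h1 : C.card + (G ∩ O).card = G.card := hC ▸ Finset.card_sdiff_add_card_inter G O
    have h2 : k + (O ∩ G).card = O.card := by
      rw [hk, hOutdef]; exact Finset.card_sdiff_add_card_inter O G
    rw [Finset.inter_comm O G] at h2
    omega
  set q : U → ℝ := fun o => ∑ x ∈ C, d o x with hq
  set r : U → ℝ := fun o => ∑ x ∈ G ∩ O, d o x with hr
  have hoOut : ∀ o ∈ Out, o ∈ O ∧ o ∉ G := by
    intro o ho; exact Finset.mem_sdiff.mp ho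
  -- split of distance-to-G sums
  have hsplitG : ∀ o : U, r o + q o = ∑ x ∈ G, d o x := by
    intro o
    rw [hr, hq, hC, add_comm, ← Finset.sum_union (Finset.disjoint_sdiff_inter G O),
      Finset.sdiff_union_inter]
  have hRQ : ∑ o ∈ Out, (r o + q o) ≤ (k : ℝ) * g := by
    calc ∑ o ∈ Out, (r o + q o) ≤ ∑ _o ∈ Out, g := by
          apply Finset.sum_le_sum
          intro o ho
          rw [hsplitG o]
          exact hg o (hoOut o ho).2
      _ = (k : ℝ) * g := by rw [Finset.sum_const, nsmul_eq_mul]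
  have hQnonneg : 0 ≤ ∑ o ∈ Out, q o :=
    Finset.sum_nonneg fun o _ => Finset.sum_nonneg fun x _ => hnonneg o x
  have hRnonneg : 0 ≤ ∑ o ∈ Out, r o :=
    Finset.sum_nonneg fun o _ => Finset.sum_nonneg fun x _ => hnonneg o x
  -- the cross-pair sums within Out
  have hP2 : ∑ o ∈ Out, ∑ o' ∈ Out.erase o, d o o' ≤ 2 * ∑ o ∈ Out, q o := by
    by_cases hk1 : k ≤ 1
    · have : ∀ o ∈ Out, Out.erase o = ∅ := by
        intro o ho
        apply Finset.card_eq_zero.mp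
        have := Finset.card_erase_of_mem ho
        omega
      calc ∑ o ∈ Out, ∑ o' ∈ Out.erase o, d o o'
          = ∑ o ∈ Out, (0 : ℝ) := by
            apply Finset.sum_congr rfl
            intro o ho; rw [this o ho, Finset.sum_empty]
        _ = 0 := Finset.sum_const_zero
        _ ≤ 2 * ∑ o ∈ Out, q o := by linarith
    · -- mediate through C, |C| = k - 1 ≥ 1
      have hCpos : 0 < C.card := by omega
      have hCposR : (0 : ℝ) < (C.card : ℝ) := by exact_mod_cast hCpos
      have key : ∀ o ∈ Out, ∀ o' ∈ Out.erase o,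
          (C.card : ℝ) * d o o' ≤ q o + q o' := by
        intro o _ o' _
        have hx : ∀ x ∈ C, d o o' ≤ d o x + d o' x := by
          intro x _
          calc d o o' ≤ d o x + d x o' := htri o x o'
            _ = d o x + d o' x := by rw [hsymm x o']
        calc (C.card : ℝ) * d o o' = ∑ _x ∈ C, d o o' := by
              rw [Finset.sum_const, nsmul_eq_mul]
          _ ≤ ∑ x ∈ C, (d o x + d o' x) := Finset.sum_le_sum hx
          _ = q o + q o' := by rw [Finset.sum_add_distrib]
      have hmul : (C.card : ℝ) * (∑ o ∈ Out, ∑ o' ∈ Out.erase o, d o o')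
          ≤ 2 * (C.card : ℝ) * ∑ o ∈ Out, q o := by
        rw [Finset.mul_sum]
        have step1 : ∀ o ∈ Out, (C.card : ℝ) * ∑ o' ∈ Out.erase o, d o o'
            ≤ ((k : ℝ) - 1) * q o + ((∑ o' ∈ Out, q o') - q o) := by
          intro o ho
          rw [Finset.mul_sum]
          calc ∑ o' ∈ Out.erase o, (C.card : ℝ) * d o o'
              ≤ ∑ o' ∈ Out.erase o, (q o + q o') := by
                apply Finset.sum_le_sum
                intro o' ho'; exact key o ho o' ho'
            _ = ((k : ℝ) - 1) * q o + ((∑ o' ∈ Out, q o') - q o) := by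
                rw [Finset.sum_add_distrib, Finset.sum_const,
                  Finset.card_erase_of_mem ho, nsmul_eq_mul,
                  Finset.sum_erase_eq_sub ho]
                have : ((k - 1 : ℕ) : ℝ) = (k : ℝ) - 1 := by
                  have : 1 ≤ k := hkpos
                  push_cast [Nat.cast_sub this]
                  ring
                rw [this]
        calc ∑ o ∈ Out, (C.card : ℝ) * ∑ o' ∈ Out.erase o, d o o'
            ≤ ∑ o ∈ Out, (((k : ℝ) - 1) * q o + ((∑ o' ∈ Out, q o') - q o)) :=
              Finset.sum_le_sum step1
          _ = 2 * (C.card : ℝ) * ∑ o ∈ Out, q o := by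
              rw [Finset.sum_add_distrib, ← Finset.mul_sum, Finset.sum_sub_distrib,
                Finset.sum_const, nsmul_eq_mul]
              have hcast : (C.card : ℝ) = (k : ℝ) - 1 := by
                have := hcardC
                push_cast [← this]
                ring
              rw [hcast]
              ring
      nlinarith [hmul, hCposR]
  -- average over Out
  have htotal : ∑ o ∈ Out, (∑ o' ∈ O.erase o, d o o') ≤ ∑ _o ∈ Out, (2 * g) := by
    have hsplitO : ∀ o ∈ Out, ∑ o' ∈ O.erase o, d o o'
        = r o + ∑ o' ∈ Out.erase o, d o o' := by
      intro o ho
      have hoG : o ∉ G := (hoOut o ho).2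
      have hdecomp : O.erase o = (G ∩ O) ∪ Out.erase o := by
        ext x
        simp only [Finset.mem_erase, Finset.mem_union, Finset.mem_inter,
          hOutdef, Finset.mem_sdiff]
        constructor
        · rintro ⟨hxo, hxO⟩
          by_cases hxG : x ∈ G
          · exact Or.inl ⟨hxG, hxO⟩
          · exact Or.inr ⟨hxo, hxO, hxG⟩
        · rintro (⟨hxG, hxO⟩ | ⟨hxo, hxO, hxG⟩)
          · refine ⟨?_, hxO⟩
            rintro rfl; exact hoG hxG
          · exact ⟨hxo, hxO⟩
      have hdisj : Disjoint (G ∩ O) (Out.erase o) := by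
        apply Finset.disjoint_left.mpr
        intro x hx hx'
        have := Finset.mem_of_mem_erase hx'
        rw [hOutdef, Finset.mem_sdiff] at this
        exact this.2 (Finset.mem_inter.mp hx).1
      rw [hdecomp, Finset.sum_union hdisj, hr]
    calc ∑ o ∈ Out, (∑ o' ∈ O.erase o, d o o')
        = ∑ o ∈ Out, (r o + ∑ o' ∈ Out.erase o, d o o') :=
          Finset.sum_congr rfl hsplitO
      _ = ∑ o ∈ Out, r o + ∑ o ∈ Out, ∑ o' ∈ Out.erase o, d o o' :=
          Finset.sum_add_distrib
      _ ≤ ∑ _o ∈ Out, (2 * g) := by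
          rw [Finset.sum_const, nsmul_eq_mul]
          have h1 : ∑ o ∈ Out, r o + ∑ o ∈ Out, q o ≤ (k : ℝ) * g := by
            rw [← Finset.sum_add_distrib]; exact hRQ
          linarith [hP2]
  obtain ⟨o, hoOut', hle⟩ := Finset.exists_le_of_sum_le hOutne htotal
  exact ⟨o, (hoOut o hoOut').1, hle⟩

lemma greedy_card (G : ℕ → Finset U) (u : ℕ → U) (hG0 : G 0 = ∅) :
    ∀ n, (∀ j < n, u j ∉ G j ∧ G (j + 1) = insert (u j) (G j)) → (G n).card = n := by
  intro n
  induction n with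
  | zero => intro _; simp [hG0]
  | succ m ih =>
    intro h
    have hm := h m (Nat.lt_succ_self m)
    rw [hm.2, Finset.card_insert_of_notMem hm.1, ih (fun j hj => h j (by omega))]

lemma greedy_main (d : U → U → ℝ)
    (hsymm : ∀ u v, d u v = d v u)
    (hnonneg : ∀ u v, 0 ≤ d u v)
    (hrefl : ∀ u, d u u = 0)
    (htri : ∀ u v w, d u w ≤ d u v + d v w)
    (G : ℕ → Finset U) (u : ℕ → U) (hG0 : G 0 = ∅) :
    ∀ p, (∀ i < p, u i ∉ G i ∧ G (i + 1) = insert (u i) (G i) ∧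
        ∀ v ∉ G i, ∑ x ∈ G i, d v x ≤ ∑ x ∈ G i, d (u i) x) →
      ∀ O : Finset U, O.card = p → dispSet d (G p) ≥ (1 / 2) * dispSet d O := by
  intro p
  induction p with
  | zero =>
    intro _ O hO
    rw [Finset.card_eq_zero] at hO
    subst hO
    rw [hG0]
    simp [dispSet]
  | succ n ih =>
    intro hstep O hO
    have hn := hstep n (Nat.lt_succ_self n)
    set g : ℝ := ∑ x ∈ G n, d (u n) x with hgdef
    have hgnn : 0 ≤ g := Finset.sum_nonneg fun x _ => hnonneg _ x
    have hcardGn : (G n).card = n :=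
      greedy_card G u hG0 n (fun j hj => ⟨(hstep j (by omega)).1, (hstep j (by omega)).2.1⟩)
    obtain ⟨o, hoO, how⟩ := exists_cheap_point d hsymm hnonneg htri (G n) O
      (by rw [hcardGn, hO]) g hn.2.2
    have hGsucc : dispSet d (G (n + 1)) = dispSet d (G n) + g := by
      rw [hn.2.1, dispSet_insert d hsymm hrefl hn.1]
    have hOsplit : dispSet d O = dispSet d (O.erase o) + ∑ o' ∈ O.erase o, d o o' := by
      conv_lhs => rw [← Finset.insert_erase hoO]
      rw [dispSet_insert d hsymm hrefl (Finset.notMem_erase o O)]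
    have ihh := ih (fun i hi => hstep i (by omega)) (O.erase o)
      (by rw [Finset.card_erase_of_mem hoO, hO]; omega)
    rw [hGsucc]
    linarith

end Aux

/-- The vertex-greedy algorithm of Ravi, Rosenkrantz and Tayi (which at each step adds
an element maximizing the sum of distances to the current set) has approximation ratio
no worse than 2 for the max-sum `p`-dispersion problem in a metric space. -/
theorem stmt_18 {U : Type*} [Fintype U] [DecidableEq U] (d : U → U → ℝ)
    (hsymm : ∀ u v, d u v = d v u)
    (hnonneg : ∀ u v, 0 ≤ d u v)
    (hrefl : ∀ u, d u u = 0)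
    (htri : ∀ u v w, d u w ≤ d u v + d v w)
    (p : ℕ) (hp : 1 ≤ p) (hUp : p ≤ Fintype.card U)
    (G : ℕ → Finset U) (u : ℕ → U)
    (hG0 : G 0 = ∅)
    (hstep : ∀ i < p, u i ∉ G i ∧ G (i + 1) = insert (u i) (G i) ∧
      ∀ v ∉ G i, ∑ x ∈ G i, d v x ≤ ∑ x ∈ G i, d (u i) x)
    (O : Finset U) (hO : O.card = p) :
    dispSet d (G p) ≥ (1 / 2) * dispSet d O :=
  greedy_main d hsymm hnonneg hrefl htri G u hG0 p hstep O hO
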